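/- Let μ be a closure operator on 2^U (U finite) and α a nonredundant cover of μ. If (X, C) and (Y, C) are distinct pairs in α with X →̇ Y (X directly determines Y), then α is redundant — contradiction; hence a nonredundant cover contains at most one domain element per closed set up to direct determination: if (X,C), (Y,C) ∈ α with X →̇ Y then X = Y. -/

import Mathlib

open Set

variable {U : Type*}

/-- A closure operator on the power set of `U`: inclusion, monotonicity, idempotence. -/
def IsClosure (μ : Set U → Set U) : Prop :=
  (∀ X, X ⊆ μ X) ∧ (∀ X Y : Set U, X ⊆ Y → μ X ⊆ μ Y) ∧ (∀ X, μ (μ X) = μ X)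

/-- `K` is a key of `μ`: no proper subset of `K` has the same closure. -/
def IsKey (μ : Set U → Set U) (K : Set U) : Prop :=
  ∀ S : Set U, S ⊂ K → μ S ≠ μ K

/-- One step of the Extension-by-Closure recurrence for a set of pairs `α`. -/
def ecStep (α : Set (Set U × Set U)) (X : Set U) : Set U :=
  X ∪ ⋃ p ∈ {q ∈ α | q.1 ⊆ X}, p.2

/-- The iterates `Xα_t` of the Extension-by-Closure recurrence. -/
def ecIter (α : Set (Set U × Set U)) (X : Set U) : ℕ → Set U
  | 0 => X
  | n + 1 => ecStep α (ecIter α X n)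

/-- `Xα⁺`: the eventual stable value of the increasing recurrence
(for finite `U` the union over all iterates is the stable limit). -/
def extC (α : Set (Set U × Set U)) : Set U → Set U :=
  fun X => ⋃ n, ecIter α X n

/-- The closure `μ` viewed as a set of pairs `(X, Xμ)`. -/
def graphOf (μ : Set U → Set U) : Set (Set U × Set U) :=
  {p | p.2 = μ p.1}

/-- `α` is a cover of `μ`: a subset of `μ` (as pairs) with `α⁺ = μ`. -/
def IsCover (μ : Set U → Set U) (α : Set (Set U × Set U)) : Prop :=
  α ⊆ graphOf μ ∧ extC α = μ

/-- A nonredundant cover of `μ`: a cover no proper subset of which has closure `μ`. -/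
def NonredundantCover (μ : Set U → Set U) (α : Set (Set U × Set U)) : Prop :=
  IsCover μ α ∧ ∀ β : Set (Set U × Set U), β ⊂ α → extC β ≠ μ

/-! Let `β = α \ {(X, C)}`. We show `Zβ⁺ ⊇ Zμ` by well-founded induction on `Zμ`, which makes
`β` a proper subset of `α` with `β⁺ = μ`. By induction, every rule `(S, Sμ)` with `Sμ ⊊ Zμ` is
derivable from `β`, so `W = Zβ⁺` is closed under `μ_{⊂C}` whenever `X ⊆ W` (then `C = Xμ ⊆ Zμ`).
Hence `X ⊆ W` gives `Y ⊆ X(μ_{⊂C})⁺ ⊆ W`, and the rule `(Y, C) ∈ β` puts `C` into `W`: the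
removed rule `(X, C)` is never needed. -/

def IsClosedUnder (α : Set (Set U × Set U)) (W : Set U) : Prop :=
  ∀ p ∈ α, p.1 ⊆ W → p.2 ⊆ W

section ExtensionByClosure

variable {α β : Set (Set U × Set U)}

lemma IsClosedUnder.mono (h : α ⊆ β) {W : Set U} (hW : IsClosedUnder β W) :
    IsClosedUnder α W :=
  fun p hp => hW p (h hp)

lemma IsClosedUnder.insert {W X C : Set U} (hW : IsClosedUnder α W) (hXC : X ⊆ W → C ⊆ W) :
    IsClosedUnder (insert (X, C) α) W := by
  rintro p (rfl | hp)
  · exact hXC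
  · exact hW p hp

lemma ecIter_mono (α : Set (Set U × Set U)) (X : Set U) : Monotone (ecIter α X) :=
  monotone_nat_of_le_succ fun _ => subset_union_left

lemma subset_extC (α : Set (Set U × Set U)) (X : Set U) : X ⊆ extC α X :=
  subset_iUnion (ecIter α X) 0

lemma extC_subset_of_isClosedUnder {X W : Set U} (hXW : X ⊆ W) (hW : IsClosedUnder α W) :
    extC α X ⊆ W := by
  refine iUnion_subset fun n => ?_
  induction n with
  | zero => exact hXW
  | succ n ih => exact union_subset ih (iUnion₂_subset fun p hp => hW p hp.1 (hp.2.trans ih))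

-- Finiteness is needed here: a premise inside `⋃ n, ecIter α X n` lies in a single iterate.
lemma isClosedUnder_extC [Finite U] (α : Set (Set U × Set U)) (X : Set U) :
    IsClosedUnder α (extC α X) := by
  intro p hp hp1
  obtain ⟨N, hN⟩ := (ecIter_mono α X).directed_le.exists_mem_subset_of_finset_subset_biUnion
    (s := (toFinite p.1).toFinset) (by simpa [extC] using hp1)
  rw [Finite.coe_toFinset] at hN
  have hfires : p ∈ {q ∈ α | q.1 ⊆ ecIter α X N} := ⟨hp, hN⟩
  exact (subset_biUnion_of_mem (u := Prod.snd) hfires).trans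
    (subset_union_right.trans (subset_iUnion (ecIter α X) (N + 1)))

lemma extC_mono [Finite U] (h : α ⊆ β) (X : Set U) : extC α X ⊆ extC β X :=
  extC_subset_of_isClosedUnder (subset_extC β X) ((isClosedUnder_extC β X).mono h)

end ExtensionByClosure

lemma extC_eq_of_subset_of_isCover [Finite U] {μ : Set U → Set U} {α β : Set (Set U × Set U)}
    (hα : IsCover μ α) (hβ : β ⊆ α) (h : ∀ Z, μ Z ⊆ extC β Z) : extC β = μ :=
  funext fun Z => (hα.2 ▸ extC_mono hβ Z).antisymm (h Z)

lemma IsClosure.subset_of_subset {μ : Set U → Set U} (hμ : IsClosure μ) {S T : Set U}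
    (h : S ⊆ μ T) : μ S ⊆ μ T :=
  hμ.2.2 T ▸ hμ.2.1 S (μ T) h

lemma subset_extC_diff_singleton [Finite U] {μ : Set U → Set U} (hμ : IsClosure μ)
    {α : Set (Set U × Set U)} (hα : IsCover μ α) {X Y C : Set U} (hX : (X, C) ∈ α)
    (hY : (Y, C) ∈ α \ {(X, C)}) (hdd : Y ⊆ extC {p ∈ graphOf μ | p.2 ⊂ C} X) (Z : Set U) :
    μ Z ⊆ extC (α \ {(X, C)}) Z := by
  set β := α \ {(X, C)}
  induction hK : μ Z using WellFoundedLT.induction generalizing Z with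
  | ind K ih =>
    subst hK
    set W := extC β Z
    have hWβ : IsClosedUnder β W := isClosedUnder_extC β Z
    have hWμ : W ⊆ μ Z := hα.2 ▸ extC_mono sdiff_subset Z
    have hlower : IsClosedUnder {p ∈ graphOf μ | p.2 ⊂ μ Z} W := by
      rintro q ⟨hq, hqZ⟩ hqW
      rw [hq] at hqZ ⊢
      exact (ih _ hqZ q.1 rfl).trans (extC_subset_of_isClosedUnder hqW hWβ)
    have hXC : X ⊆ W → C ⊆ W := by
      intro hXW
      have hCZ : C ⊆ μ Z := by
        rw [show C = μ X from hα.1 hX]; exact hμ.subset_of_subset (hXW.trans hWμ)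
      have hbelowC : {p ∈ graphOf μ | p.2 ⊂ C} ⊆ {p ∈ graphOf μ | p.2 ⊂ μ Z} :=
        fun p hp => ⟨hp.1, hp.2.trans_subset hCZ⟩
      have hYW : Y ⊆ W := hdd.trans (extC_subset_of_isClosedUnder hXW (hlower.mono hbelowC))
      exact hWβ _ hY hYW
    have hWα : IsClosedUnder α W := (hWβ.insert hXC).mono (subset_insert_sdiff_singleton _ _)
    exact hα.2 ▸ extC_subset_of_isClosedUnder (subset_extC β Z) hWα

theorem nonredundant_no_dd_pair [Finite U] (μ : Set U → Set U) (hμ : IsClosure μ)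
    (α : Set (Set U × Set U)) (hα : NonredundantCover μ α)
    (X Y C : Set U) (hX : (X, C) ∈ α) (hY : (Y, C) ∈ α)
    (hdd : Y ⊆ extC {p ∈ graphOf μ | p.2 ⊂ C} X) :
    X = Y := by
  by_contra hXY
  have hYβ : (Y, C) ∈ α \ {(X, C)} := ⟨hY, fun h => hXY (congrArg Prod.fst h).symm⟩
  have hβα : α \ {(X, C)} ⊂ α := sdiff_singleton_ssubset.mpr hX
  exact hα.2 _ hβα <| extC_eq_of_subset_of_isCover hα.1 sdiff_subset
    (subset_extC_diff_singleton hμ hα.1 hX hYβ hdd)
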